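/- Let X be a random variable with finite range, let L_1,…,L_n be {0,1}-valued random variables, and let T=(T_1,…,T_m) be a finite sequence of finite-valued messages with a speaker assignment j:{1,…,m}→{1,…,n}, such that for each round k, conditioned on (T_1,…,T_{k−1}) = t^{k−1} and L_{j(k)}=0, the message T_k is independent of X. Let 0 < b ≤ c < 1 and assume: (i) Pr(L_i=1 | X=x) = b for every player i and every x with Pr(X=x) > 0, and (ii) Pr(L_i=1 | T=t, X=x) ≤ c for every player i and every (t,x) with Pr(T=t, X=x) > 0. Then I(X;T) ≤ n·(−b·log(1−c) + c·log(1−b))/c. -/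

import Mathlib

open Finset

/-- Probability of an event `E` under the probability mass function `p`
on a finite sample space `Ω`. -/
noncomputable def Pr {Ω : Type*} [Fintype Ω] (p : Ω → ℝ) (E : Set Ω) : ℝ :=
  ∑ ω, E.indicator p ω

/-- Conditional probability `Pr(E | F)`. -/
noncomputable def cPr {Ω : Type*} [Fintype Ω] (p : Ω → ℝ) (E F : Set Ω) : ℝ :=
  Pr p (E ∩ F) / Pr p F

/-- The suspicion given a random variable `Yv`:
`susp(Y) = Σ_y Pr(Y=y) · (−log₂ Pr(L=0 | Y=y))`. -/
noncomputable def susp {Ω Y : Type*} [Fintype Ω] [Fintype Y] (p : Ω → ℝ)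
    (L : Ω → Bool) (Yv : Ω → Y) : ℝ :=
  ∑ y, Pr p {ω | Yv ω = y} * (-Real.logb 2 (cPr p {ω | L ω = false} {ω | Yv ω = y}))

/-- Mutual information (base 2) between two finite-valued random variables. -/
noncomputable def mutInfo {Ω S T : Type*} [Fintype Ω] [Fintype S] [Fintype T]
    (p : Ω → ℝ) (Xv : Ω → S) (Av : Ω → T) : ℝ :=
  ∑ x, ∑ a, Pr p {ω | Xv ω = x ∧ Av ω = a} *
    Real.logb 2 (Pr p {ω | Xv ω = x ∧ Av ω = a} /
      (Pr p {ω | Xv ω = x} * Pr p {ω | Av ω = a}))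

/-- Conditional Shannon entropy (base 2) `H(A | X)`. -/
noncomputable def condEntropy {Ω S T : Type*} [Fintype Ω] [Fintype S] [Fintype T]
    (p : Ω → ℝ) (Av : Ω → T) (Xv : Ω → S) : ℝ :=
  ∑ x, ∑ a, Pr p {ω | Xv ω = x ∧ Av ω = a} *
    Real.logb 2 (Pr p {ω | Xv ω = x} / Pr p {ω | Xv ω = x ∧ Av ω = a})

/-- Conditional mutual information (base 2) `I(X; A | Z)`. -/
noncomputable def condMutInfo {Ω S T U : Type*} [Fintype Ω] [Fintype S] [Fintype T] [Fintype U]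
    (p : Ω → ℝ) (Xv : Ω → S) (Av : Ω → T) (Zv : Ω → U) : ℝ :=
  ∑ z, ∑ x, ∑ a, Pr p {ω | Xv ω = x ∧ Av ω = a ∧ Zv ω = z} *
    Real.logb 2 ((Pr p {ω | Xv ω = x ∧ Av ω = a ∧ Zv ω = z} * Pr p {ω | Zv ω = z}) /
      (Pr p {ω | Xv ω = x ∧ Zv ω = z} * Pr p {ω | Av ω = a ∧ Zv ω = z}))

/-!
Reveal the transcript one message at a time and write `σᵢ(k)` for the suspicion of player `i`
given `X` and the first `k` messages. Revealing a message can only increase every `σᵢ`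
(Gibbs' inequality; leak-free outcomes keep positive probability because the posterior leak
probability stays `≤ c < 1`). When player `i` speaks, the message is independent of `X` given
the past and `Lᵢ = 0`, and the same inequality gives
`I(X; T^{≤k+1}) - I(X; T^{≤k}) ≤ σᵢ(k+1) - σᵢ(k)`. Telescoping yields
`I(X; T) ≤ Σᵢ (σᵢ(m) - σᵢ(0))`. The prior gives `σᵢ(0) = -log(1-b)` and `Pr(Lᵢ = 0) = 1 - b`,
and since `-log` lies below its secant on `[1-c, 1]`, the posterior bound gives
`σᵢ(m) ≤ (b/c)·(-log(1-c))`.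
-/

section Fiber

variable {Ω V W : Type*}

def fiber (Y : Ω → V) (ω : Ω) : Set Ω := {ω' | Y ω' = Y ω}

lemma mem_fiber_self (Y : Ω → V) (ω : Ω) : ω ∈ fiber Y ω := rfl

lemma fiber_prod (X : Ω → V) (Y : Ω → W) (ω : Ω) :
    fiber (fun ω => (X ω, Y ω)) ω = fiber X ω ∩ fiber Y ω := by
  ext; simp [fiber]

lemma fiber_subset_fiber_comp (Y : Ω → V) (g : V → W) (ω : Ω) :
    fiber Y ω ⊆ fiber (fun ω => g (Y ω)) ω :=
  fun _ h => congrArg g h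

lemma fiber_comp_of_injective (Y : Ω → V) {g : V → W} (hg : g.Injective) (ω : Ω) :
    fiber (fun ω => g (Y ω)) ω = fiber Y ω :=
  Set.ext fun _ => hg.eq_iff

lemma fiber_const (v : V) (ω : Ω) : fiber (fun _ : Ω => v) ω = Set.univ :=
  Set.eq_univ_of_forall fun _ => rfl

end Fiber

section Probability

variable {Ω V : Type*} [Fintype Ω] {p : Ω → ℝ}

lemma Pr_nonneg (hp : ∀ ω, 0 ≤ p ω) (E : Set Ω) : 0 ≤ Pr p E :=
  Finset.sum_nonneg fun ω _ => Set.indicator_nonneg (fun ω _ => hp ω) ω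

lemma Pr_mono (hp : ∀ ω, 0 ≤ p ω) {E F : Set Ω} (h : E ⊆ F) : Pr p E ≤ Pr p F :=
  Finset.sum_le_sum fun ω _ => Set.indicator_le_indicator_of_subset h (fun ω => hp ω) ω

lemma Pr_pos_of_subset (hp : ∀ ω, 0 ≤ p ω) {E F : Set Ω} (h : E ⊆ F) (hE : 0 < Pr p E) :
    0 < Pr p F :=
  hE.trans_le (Pr_mono hp h)

lemma le_Pr (hp : ∀ ω, 0 ≤ p ω) {E : Set Ω} {ω : Ω} (h : ω ∈ E) : p ω ≤ Pr p E := by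
  unfold Pr
  simpa [Set.indicator_of_mem h] using
    Finset.single_le_sum (fun ω _ => Set.indicator_nonneg (fun ω _ => hp ω) ω)
      (Finset.mem_univ ω) (f := E.indicator p)

lemma Pr_univ (hp1 : ∑ ω, p ω = 1) : Pr p (Set.univ : Set Ω) = 1 := by
  simp [Pr, hp1]

lemma Pr_inter_add_Pr_compl_inter (E F : Set Ω) :
    Pr p (E ∩ F) + Pr p (Eᶜ ∩ F) = Pr p F := by
  simp only [Pr, ← Finset.sum_add_distrib]
  refine Finset.sum_congr rfl fun ω _ => ?_
  by_cases hE : ω ∈ E <;> by_cases hF : ω ∈ F <;> simp [Set.indicator, hE, hF]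

lemma cPr_le_one (hp : ∀ ω, 0 ≤ p ω) (E F : Set Ω) : cPr p E F ≤ 1 :=
  div_le_one_of_le₀ (Pr_mono hp Set.inter_subset_right) (Pr_nonneg hp _)

lemma cPr_pos (hp : ∀ ω, 0 ≤ p ω) {E F : Set Ω} (h : 0 < Pr p (E ∩ F)) : 0 < cPr p E F :=
  div_pos h (h.trans_le (Pr_mono hp Set.inter_subset_right))

lemma cPr_add_cPr_compl {E F : Set Ω} (hF : Pr p F ≠ 0) : cPr p E F + cPr p Eᶜ F = 1 := by
  rw [cPr, cPr, ← add_div, Pr_inter_add_Pr_compl_inter, div_self hF]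

lemma cPr_false_eq_one_sub (L : Ω → Bool) {F : Set Ω} (hF : Pr p F ≠ 0) :
    cPr p {ω | L ω = false} F = 1 - cPr p {ω | L ω = true} F := by
  have hcompl : {ω | L ω = false}ᶜ = {ω | L ω = true} := by ext; simp
  rw [← cPr_add_cPr_compl (E := {ω | L ω = false}) hF, hcompl, add_sub_cancel_right]

lemma cPr_false_fiber_eq (hp : ∀ ω, 0 ≤ p ω) (L : Ω → Bool) (X : Ω → V) {b : ℝ}
    (hprior : ∀ x, 0 < Pr p {ω | X ω = x} → cPr p {ω | L ω = true} {ω | X ω = x} = b)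
    {ω : Ω} (hω : 0 < p ω) : cPr p {ω | L ω = false} (fiber X ω) = 1 - b := by
  have hX : 0 < Pr p (fiber X ω) := hω.trans_le (le_Pr hp (mem_fiber_self X ω))
  rw [cPr_false_eq_one_sub _ hX.ne']
  exact congrArg (1 - ·) (hprior (X ω) hX)

lemma mul_cPr {E F : Set Ω} (hp : ∀ ω, 0 ≤ p ω) : Pr p F * cPr p E F = Pr p (E ∩ F) := by
  rcases (Pr_nonneg hp F).eq_or_lt with h | h
  · rw [← h, zero_mul]
    exact (le_antisymm (h ▸ Pr_mono hp Set.inter_subset_right) (Pr_nonneg hp _)).symm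
  · exact mul_div_cancel₀ _ h.ne'

lemma Pr_inter_pos_of_cPr_ge (hp : ∀ ω, 0 ≤ p ω) {c : ℝ} (hc1 : c < 1) {E F : Set Ω}
    (h : 1 - c ≤ cPr p E F) (hF : 0 < Pr p F) : 0 < Pr p (E ∩ F) := by
  rw [← mul_cPr hp]
  exact mul_pos hF ((sub_pos.2 hc1).trans_le h)

lemma sum_Pr_inter_mul [Fintype V] (E : Set Ω) (Y : Ω → V) (G : V → ℝ) :
    ∑ v, Pr p (E ∩ {ω | Y ω = v}) * G v = ∑ ω, E.indicator p ω * G (Y ω) := by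
  classical
  rw [← Finset.sum_fiberwise Finset.univ Y]
  refine Finset.sum_congr rfl fun v _ => ?_
  rw [Pr, Finset.sum_mul, Finset.sum_filter]
  refine Finset.sum_congr rfl fun ω _ => ?_
  by_cases hv : Y ω = v <;> simp [hv, Set.indicator]

lemma sum_Pr_mul [Fintype V] (Y : Ω → V) (G : V → ℝ) :
    ∑ v, Pr p {ω | Y ω = v} * G v = ∑ ω, p ω * G (Y ω) := by
  simpa using sum_Pr_inter_mul (p := p) Set.univ Y G

lemma sum_mul_cPr_fiber [Fintype V] (hp : ∀ ω, 0 ≤ p ω) (E : Set Ω) (Y : Ω → V) (G : V → ℝ) :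
    ∑ ω, p ω * (cPr p E (fiber Y ω) * G (Y ω)) = ∑ ω, E.indicator p ω * G (Y ω) := by
  rw [← sum_Pr_inter_mul]
  refine (sum_Pr_mul Y fun v => cPr p E {ω | Y ω = v} * G v).symm.trans ?_
  exact Finset.sum_congr rfl fun v _ => by rw [← mul_assoc, mul_cPr hp]

lemma sum_mul_cPr_fiber_eq_Pr [Fintype V] (hp : ∀ ω, 0 ≤ p ω) (E : Set Ω) (Y : Ω → V) :
    ∑ ω, p ω * cPr p E (fiber Y ω) = Pr p E := by
  simpa [Pr] using sum_mul_cPr_fiber hp E Y fun _ => 1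

lemma Pr_eq_of_cPr_fiber_eq [Fintype V] (hp : ∀ ω, 0 ≤ p ω) (hp1 : ∑ ω, p ω = 1) (E : Set Ω)
    (Y : Ω → V) {β : ℝ} (h : ∀ ω, 0 < p ω → cPr p E (fiber Y ω) = β) : Pr p E = β := by
  rw [← sum_mul_cPr_fiber_eq_Pr hp E Y]
  calc ∑ ω, p ω * cPr p E (fiber Y ω) = ∑ ω, p ω * β := Finset.sum_congr rfl fun ω _ => by
        rcases (hp ω).eq_or_lt with h0 | hpω
        · simp [← h0]
        · rw [h ω hpω]
    _ = β := by rw [← Finset.sum_mul, hp1, one_mul]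

end Probability

lemma sum_mul_logb_nonpos {ι : Type*} [Fintype ι] {w u : ι → ℝ} (hw : ∀ i, 0 ≤ w i)
    (hu : ∀ i, 0 < w i → 0 < u i) (h : ∑ i, w i * u i ≤ ∑ i, w i) :
    ∑ i, w i * Real.logb 2 (u i) ≤ 0 := by
  have hterm : ∀ i, w i * Real.logb 2 (u i) ≤ (w i * u i - w i) / Real.log 2 := by
    intro i
    rcases (hw i).eq_or_lt with h0 | hpos
    · simp [← h0]
    · rw [Real.logb, mul_div_assoc']
      gcongr
      exact (mul_le_mul_of_nonneg_left (Real.log_le_sub_one_of_pos (hu i hpos)) (hw i)).trans_eq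
        (by ring)
  refine (Finset.sum_le_sum fun i _ => hterm i).trans ?_
  rw [← Finset.sum_div, Finset.sum_sub_distrib]
  exact div_nonpos_of_nonpos_of_nonneg (by linarith) (Real.log_nonneg one_le_two)

lemma neg_logb_le_secant {c t : ℝ} (hc0 : 0 < c) (hc1 : c < 1) (ht : 1 - c ≤ t) (ht1 : t ≤ 1) :
    -Real.logb 2 t ≤ (1 - t) / c * -Real.logb 2 (1 - c) := by
  set θ := (1 - t) / c
  have hθ0 : 0 ≤ θ := div_nonneg (by linarith) hc0.le
  have hθ1 : θ ≤ 1 := (div_le_one hc0).2 (by linarith)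
  have hconv : θ • (1 - c) + (1 - θ) • (1 : ℝ) = t := by
    simp only [smul_eq_mul, θ]
    field_simp
    ring
  have hlog := strictConcaveOn_log_Ioi.concaveOn.2 (Set.mem_Ioi.2 (by linarith : (0 : ℝ) < 1 - c))
    (Set.mem_Ioi.2 one_pos) hθ0 (sub_nonneg.2 hθ1) (add_sub_cancel θ 1)
  rw [hconv] at hlog
  simp only [smul_eq_mul, Real.log_one, mul_zero, add_zero] at hlog
  rw [Real.logb, Real.logb, ← neg_div, ← neg_div, mul_div_assoc']
  gcongr
  linarith

lemma sub_le_sum_sub_of_step_le {ι : Type*} [Fintype ι] (I : ℕ → ℝ) (s : ι → ℕ → ℝ) (m : ℕ)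
    (hs : ∀ i k, s i k ≤ s i (k + 1))
    (hI : ∀ k < m, ∃ i, I (k + 1) - I k ≤ s i (k + 1) - s i k) :
    I m - I 0 ≤ ∑ i, (s i m - s i 0) := by
  induction m with
  | zero => simp
  | succ m ih =>
    obtain ⟨i, hi⟩ := hI m m.lt_succ_self
    have hsum : s i (m + 1) - s i m ≤ ∑ i, (s i (m + 1) - s i m) :=
      Finset.single_le_sum (f := fun i => s i (m + 1) - s i m)
        (fun i _ => sub_nonneg.2 (hs i m)) (Finset.mem_univ i)
    have ih := ih fun k hk => hI k (hk.trans m.lt_succ_self)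
    have hsplit : ∑ i, (s i (m + 1) - s i 0) =
        ∑ i, (s i m - s i 0) + ∑ i, (s i (m + 1) - s i m) := by
      rw [← Finset.sum_add_distrib]
      exact Finset.sum_congr rfl fun i _ => by ring
    linarith

section Information

variable {Ω S V W ι : Type*} [Fintype Ω] [Fintype S] [Fintype V] [Fintype W] [Fintype ι]
  {p : Ω → ℝ}

lemma susp_eq_sum (L : Ω → Bool) (Y : Ω → V) :
    susp p L Y = ∑ ω, p ω * -Real.logb 2 (cPr p {ω | L ω = false} (fiber Y ω)) :=
  sum_Pr_mul Y fun v => -Real.logb 2 (cPr p {ω | L ω = false} {ω | Y ω = v})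

lemma mutInfo_eq_sum (X : Ω → S) (A : Ω → V) :
    mutInfo p X A = ∑ ω, p ω * Real.logb 2
      (Pr p (fiber X ω ∩ fiber A ω) / (Pr p (fiber X ω) * Pr p (fiber A ω))) := by
  have hpair : ∀ xa : S × V, {ω | X ω = xa.1 ∧ A ω = xa.2} = {ω | (X ω, A ω) = xa} :=
    fun xa => by ext; simp [Prod.ext_iff]
  rw [mutInfo, ← Fintype.sum_prod_type']
  simp_rw [hpair, ← fiber_prod]
  exact sum_Pr_mul (fun ω => (X ω, A ω)) fun xa => Real.logb 2
    (Pr p {ω | (X ω, A ω) = xa} / (Pr p {ω | X ω = xa.1} * Pr p {ω | A ω = xa.2}))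

lemma mutInfo_comp_of_injective (X : Ω → S) (A : Ω → V) {g : V → W} (hg : g.Injective) :
    mutInfo p X (fun ω => g (A ω)) = mutInfo p X A := by
  simp only [mutInfo_eq_sum, fiber_comp_of_injective A hg]

lemma mutInfo_const (hp1 : ∑ ω, p ω = 1) (X : Ω → S) (v : V) :
    mutInfo p X (fun _ => v) = 0 := by
  rw [mutInfo_eq_sum]
  refine Finset.sum_eq_zero fun ω _ => ?_
  rw [fiber_const, Set.inter_univ, Pr_univ hp1, mul_one]
  by_cases h : Pr p (fiber X ω) = 0 <;> simp [h]

lemma susp_eq_of_cPr_fiber_eq (hp : ∀ ω, 0 ≤ p ω) (hp1 : ∑ ω, p ω = 1) (L : Ω → Bool)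
    (Y : Ω → V) {β : ℝ} (h : ∀ ω, 0 < p ω → cPr p {ω | L ω = false} (fiber Y ω) = β) :
    susp p L Y = -Real.logb 2 β := by
  rw [susp_eq_sum]
  calc ∑ ω, p ω * -Real.logb 2 (cPr p {ω | L ω = false} (fiber Y ω))
      = ∑ ω, p ω * -Real.logb 2 β := Finset.sum_congr rfl fun ω _ => by
        rcases (hp ω).eq_or_lt with h0 | hpω
        · simp [← h0]
        · rw [h ω hpω]
    _ = -Real.logb 2 β := by rw [← Finset.sum_mul, hp1, one_mul]

lemma susp_le_of_cPr_fiber_ge (hp : ∀ ω, 0 ≤ p ω) (hp1 : ∑ ω, p ω = 1) (L : Ω → Bool)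
    (Y : Ω → V) {c : ℝ} (hc0 : 0 < c) (hc1 : c < 1)
    (h : ∀ ω, 0 < p ω → 1 - c ≤ cPr p {ω | L ω = false} (fiber Y ω)) :
    susp p L Y ≤ (1 - Pr p {ω | L ω = false}) / c * -Real.logb 2 (1 - c) := by
  set E := {ω | L ω = false}
  rw [susp_eq_sum]
  calc ∑ ω, p ω * -Real.logb 2 (cPr p E (fiber Y ω))
      ≤ ∑ ω, (p ω - p ω * cPr p E (fiber Y ω)) * (-Real.logb 2 (1 - c) / c) :=
        Finset.sum_le_sum fun ω _ => by
          rcases (hp ω).eq_or_lt with h0 | hpω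
          · simp [← h0]
          · have := mul_le_mul_of_nonneg_left
              (neg_logb_le_secant hc0 hc1 (h ω hpω) (cPr_le_one hp _ _)) hpω.le
            exact this.trans_eq (by ring)
    _ = (1 - Pr p E) / c * -Real.logb 2 (1 - c) := by
        rw [← Finset.sum_mul, Finset.sum_sub_distrib, hp1, sum_mul_cPr_fiber_eq_Pr hp]
        ring

lemma susp_comp_le (hp : ∀ ω, 0 ≤ p ω) (L : Ω → Bool) (Y : Ω → V) (g : V → W)
    (hpos : ∀ ω, 0 < p ω → 0 < Pr p ({ω | L ω = false} ∩ fiber Y ω)) :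
    susp p L (fun ω => g (Y ω)) ≤ susp p L Y := by
  set E := {ω | L ω = false}
  set α := fun ω => cPr p E (fiber Y ω)
  set β := fun ω => cPr p E (fiber (fun ω => g (Y ω)) ω)
  have hα : ∀ ω, 0 < p ω → 0 < α ω := fun ω h => cPr_pos hp (hpos ω h)
  have hβ : ∀ ω, 0 < p ω → 0 < β ω := fun ω h => cPr_pos hp <| Pr_pos_of_subset hp
    (Set.inter_subset_inter_right _ (fiber_subset_fiber_comp Y g ω)) (hpos ω h)
  have hdiff : ∑ ω, p ω * -Real.logb 2 (β ω) - ∑ ω, p ω * -Real.logb 2 (α ω) =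
      ∑ ω, p ω * Real.logb 2 (α ω * (β ω)⁻¹) := by
    rw [← Finset.sum_sub_distrib]
    refine Finset.sum_congr rfl fun ω _ => ?_
    rcases (hp ω).eq_or_lt with h0 | hpω
    · simp [← h0]
    · rw [Real.logb_mul (hα ω hpω).ne' (inv_ne_zero (hβ ω hpω).ne'), Real.logb_inv]
      ring
  -- The tower property, applied once for `Y` and once for `g ∘ Y`, shows `𝔼[α / β] ≤ 1`.
  have hmean : ∑ ω, p ω * (α ω * (β ω)⁻¹) ≤ ∑ ω, p ω := by
    calc ∑ ω, p ω * (α ω * (β ω)⁻¹)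
        = ∑ ω, E.indicator p ω * (cPr p E {ω' | g (Y ω') = g (Y ω)})⁻¹ :=
          sum_mul_cPr_fiber hp E Y fun v => (cPr p E {ω' | g (Y ω') = g v})⁻¹
      _ = ∑ ω, p ω * (β ω * (β ω)⁻¹) :=
          (sum_mul_cPr_fiber hp E (fun ω => g (Y ω)) fun w => (cPr p E {ω' | g (Y ω') = w})⁻¹).symm
      _ ≤ ∑ ω, p ω := Finset.sum_le_sum fun ω _ =>
          mul_le_of_le_one_right (hp ω) mul_inv_le_one
  rw [susp_eq_sum, susp_eq_sum, ← sub_nonpos, hdiff]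
  exact sum_mul_logb_nonpos hp (fun ω h => mul_pos (hα ω h) (inv_pos.2 (hβ ω h))) hmean

/-- `hind` is the conditional independence of `X` and `A` given `g ∘ A` and `L = false`, in
cross-multiplied form. -/
lemma mutInfo_sub_mutInfo_comp_eq (hp : ∀ ω, 0 ≤ p ω) (X : Ω → S) (A : Ω → V) (g : V → W)
    (L : Ω → Bool)
    (hpos : ∀ ω, 0 < p ω → 0 < Pr p ({ω | L ω = false} ∩ (fiber X ω ∩ fiber A ω)))
    (hind : ∀ ω, 0 < p ω →
      Pr p ({ω | L ω = false} ∩ (fiber X ω ∩ fiber A ω)) *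
          Pr p ({ω | L ω = false} ∩ fiber (fun ω => g (A ω)) ω) =
        Pr p ({ω | L ω = false} ∩ fiber A ω) *
          Pr p ({ω | L ω = false} ∩ (fiber X ω ∩ fiber (fun ω => g (A ω)) ω))) :
    mutInfo p X A - mutInfo p X (fun ω => g (A ω)) -
        (susp p L (fun ω => (X ω, A ω)) - susp p L (fun ω => (X ω, g (A ω)))) =
      susp p L (fun ω => g (A ω)) - susp p L A := by
  simp only [mutInfo_eq_sum, susp_eq_sum, fiber_prod, ← Finset.sum_sub_distrib]
  refine Finset.sum_congr rfl fun ω _ => ?_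
  rcases (hp ω).eq_or_lt with h0 | hpω
  · simp [← h0]
  have hAZ := fiber_subset_fiber_comp A g ω
  have rxa := hpos ω hpω
  have ra := Pr_pos_of_subset hp (Set.inter_subset_inter_right _ Set.inter_subset_right) rxa
  have rxz := Pr_pos_of_subset hp
    (Set.inter_subset_inter_right _ (Set.inter_subset_inter_right _ hAZ)) rxa
  have rz := Pr_pos_of_subset hp (Set.inter_subset_inter_right _ hAZ) ra
  have qxa := Pr_pos_of_subset hp Set.inter_subset_right rxa
  have qxz := Pr_pos_of_subset hp Set.inter_subset_right rxz
  have qa := Pr_pos_of_subset hp Set.inter_subset_right ra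
  have qz := Pr_pos_of_subset hp Set.inter_subset_right rz
  have qx := Pr_pos_of_subset hp Set.inter_subset_left qxa
  have hlog := congrArg (Real.logb 2) (hind ω hpω)
  simp only [cPr, Real.logb_div, Real.logb_mul, rxa.ne', ra.ne', rxz.ne', rz.ne', qxa.ne',
    qxz.ne', qa.ne', qz.ne', qx.ne', ne_eq, not_false_eq_true, mul_ne_zero_iff, and_self]
    at hlog ⊢
  linear_combination p ω * hlog

lemma mutInfo_sub_mutInfo_comp_le (hp : ∀ ω, 0 ≤ p ω) (X : Ω → S) (A : Ω → V) (g : V → W)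
    (L : Ω → Bool)
    (hpos : ∀ ω, 0 < p ω → 0 < Pr p ({ω | L ω = false} ∩ (fiber X ω ∩ fiber A ω)))
    (hind : ∀ ω, 0 < p ω →
      Pr p ({ω | L ω = false} ∩ (fiber X ω ∩ fiber A ω)) *
          Pr p ({ω | L ω = false} ∩ fiber (fun ω => g (A ω)) ω) =
        Pr p ({ω | L ω = false} ∩ fiber A ω) *
          Pr p ({ω | L ω = false} ∩ (fiber X ω ∩ fiber (fun ω => g (A ω)) ω))) :
    mutInfo p X A - mutInfo p X (fun ω => g (A ω)) ≤
      susp p L (fun ω => (X ω, A ω)) - susp p L (fun ω => (X ω, g (A ω))) := by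
  have hcoarse := susp_comp_le hp L A g fun ω hω =>
    Pr_pos_of_subset hp (Set.inter_subset_inter_right _ Set.inter_subset_right) (hpos ω hω)
  linarith [mutInfo_sub_mutInfo_comp_eq hp X A g L hpos hind]

lemma mutInfo_sub_le_sum_susp_sub (hp : ∀ ω, 0 ≤ p ω) (X : Ω → S) (L : ι → Ω → Bool)
    (Y : ℕ → Ω → V) (g : ℕ → V → V) (hY : ∀ k ω, Y k ω = g k (Y (k + 1) ω)) (m : ℕ)
    (hpos : ∀ i k ω, 0 < p ω → 0 < Pr p ({ω | L i ω = false} ∩ (fiber X ω ∩ fiber (Y k) ω)))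
    (hind : ∀ k < m, ∃ i, ∀ ω, 0 < p ω →
      Pr p ({ω | L i ω = false} ∩ (fiber X ω ∩ fiber (Y (k + 1)) ω)) *
          Pr p ({ω | L i ω = false} ∩ fiber (Y k) ω) =
        Pr p ({ω | L i ω = false} ∩ fiber (Y (k + 1)) ω) *
          Pr p ({ω | L i ω = false} ∩ (fiber X ω ∩ fiber (Y k) ω))) :
    mutInfo p X (Y m) - mutInfo p X (Y 0) ≤
      ∑ i, (susp p (L i) (fun ω => (X ω, Y m ω)) - susp p (L i) (fun ω => (X ω, Y 0 ω))) := by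
  have hY' : ∀ k, Y k = fun ω => g k (Y (k + 1) ω) := fun k => funext (hY k)
  refine sub_le_sum_sub_of_step_le (fun k => mutInfo p X (Y k))
    (fun i k => susp p (L i) (fun ω => (X ω, Y k ω))) m (fun i k => ?_) (fun k hk => ?_)
  · calc susp p (L i) (fun ω => (X ω, Y k ω))
        = susp p (L i) (fun ω => (fun q : S × V => (q.1, g k q.2)) (X ω, Y (k + 1) ω)) := by
          rw [hY' k]
      _ ≤ susp p (L i) (fun ω => (X ω, Y (k + 1) ω)) :=
          susp_comp_le hp (L i) (fun ω => (X ω, Y (k + 1) ω)) (fun q => (q.1, g k q.2))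
            fun ω h => by rw [fiber_prod]; exact hpos i (k + 1) ω h
  · obtain ⟨i, hi⟩ := hind k hk
    refine ⟨i, ?_⟩
    have h := mutInfo_sub_mutInfo_comp_le hp X (Y (k + 1)) (g k) (L i)
    simp only [← hY] at h
    exact h (hpos i (k + 1)) hi

end Information

section Transcript

variable {Ω S M : Type*} {m : ℕ}

def mask {β : Type*} (k : ℕ) (t : Fin m → Option β) : Fin m → Option β :=
  fun i => if (i : ℕ) < k then t i else none

/-- The first `k` messages, with `none` in the slots of the later rounds. -/
def transcriptUpTo (T : Fin m → Ω → M) (k : ℕ) (ω : Ω) : Fin m → Option M :=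
  mask k fun i => some (T i ω)

lemma mask_transcriptUpTo (T : Fin m → Ω → M) {k l : ℕ} (h : k ≤ l) (ω : Ω) :
    mask k (transcriptUpTo T l ω) = transcriptUpTo T k ω := by
  funext i
  by_cases hi : (i : ℕ) < k
  · simp [mask, transcriptUpTo, hi, hi.trans_le h]
  · simp [mask, transcriptUpTo, hi]

lemma transcriptUpTo_zero (T : Fin m → Ω → M) : transcriptUpTo T 0 = fun _ _ => none := rfl

lemma transcriptUpTo_self (T : Fin m → Ω → M) : transcriptUpTo T m = fun ω i => some (T i ω) := by
  funext ω i
  simp [transcriptUpTo, mask]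

lemma fiber_transcriptUpTo (T : Fin m → Ω → M) (k : ℕ) (ω : Ω) :
    fiber (transcriptUpTo T k) ω = {ω' | ∀ i : Fin m, (i : ℕ) < k → T i ω' = T i ω} := by
  ext ω'
  simp only [fiber, transcriptUpTo, mask, Set.mem_ofPred_eq, funext_iff]
  refine forall_congr' fun i => ?_
  by_cases hi : (i : ℕ) < k <;> simp [hi]

lemma fiber_transcriptUpTo_succ (T : Fin m → Ω → M) (k : Fin m) (ω : Ω) :
    fiber (transcriptUpTo T (k + 1)) ω =
      fiber (transcriptUpTo T k) ω ∩ {ω' | T k ω' = T k ω} := by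
  ext ω'
  simp only [fiber_transcriptUpTo, Set.mem_inter_iff, Set.mem_ofPred_eq]
  constructor
  · exact fun h => ⟨fun i hi => h i (hi.trans k.val.lt_succ_self), h k k.val.lt_succ_self⟩
  · rintro ⟨hlt, hk⟩ i hi
    rcases Nat.lt_succ_iff_lt_or_eq.1 hi with hi | hi
    · exact hlt i hi
    · rwa [Fin.ext hi]

variable [Fintype Ω] {p : Ω → ℝ}

lemma condIndep_transcriptUpTo_succ (hp : ∀ ω, 0 ≤ p ω) (X : Ω → S) (T : Fin m → Ω → M)
    (L : Ω → Bool) (k : Fin m)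
    (hindep : ∀ (x : S) (a : M) (t : Fin m → M),
      0 < Pr p {ω | X ω = x ∧ (∀ i, i < k → T i ω = t i) ∧ L ω = false} →
      cPr p {ω | T k ω = a} {ω | X ω = x ∧ (∀ i, i < k → T i ω = t i) ∧ L ω = false} =
        cPr p {ω | T k ω = a} {ω | (∀ i, i < k → T i ω = t i) ∧ L ω = false})
    {ω : Ω}
    (hω : 0 < Pr p ({ω | L ω = false} ∩ (fiber X ω ∩ fiber (transcriptUpTo T k) ω))) :
    Pr p ({ω | L ω = false} ∩ (fiber X ω ∩ fiber (transcriptUpTo T (k + 1)) ω)) *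
        Pr p ({ω | L ω = false} ∩ fiber (transcriptUpTo T k) ω) =
      Pr p ({ω | L ω = false} ∩ fiber (transcriptUpTo T (k + 1)) ω) *
        Pr p ({ω | L ω = false} ∩ (fiber X ω ∩ fiber (transcriptUpTo T k) ω)) := by
  set past := {ω' | ∀ i, i < k → T i ω' = T i ω}
  have hpast : fiber (transcriptUpTo T k) ω = past := fiber_transcriptUpTo T k ω
  rw [hpast] at hω
  rw [fiber_transcriptUpTo_succ, hpast]
  have e1 : {ω | L ω = false} ∩ (fiber X ω ∩ past) =
      {ω' | X ω' = X ω ∧ (∀ i, i < k → T i ω' = T i ω) ∧ L ω' = false} := by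
    ext; simp only [fiber, past, Set.mem_inter_iff, Set.mem_ofPred_eq]; tauto
  have e2 : {ω | L ω = false} ∩ past =
      {ω' | (∀ i, i < k → T i ω' = T i ω) ∧ L ω' = false} := by
    ext; simp only [past, Set.mem_inter_iff, Set.mem_ofPred_eq]; tauto
  have e3 : {ω | L ω = false} ∩ (fiber X ω ∩ (past ∩ {ω' | T k ω' = T k ω})) =
      {ω' | T k ω' = T k ω} ∩
        {ω' | X ω' = X ω ∧ (∀ i, i < k → T i ω' = T i ω) ∧ L ω' = false} := by
    ext; simp only [fiber, past, Set.mem_inter_iff, Set.mem_ofPred_eq]; tauto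
  have e4 : {ω | L ω = false} ∩ (past ∩ {ω' | T k ω' = T k ω}) =
      {ω' | T k ω' = T k ω} ∩ {ω' | (∀ i, i < k → T i ω' = T i ω) ∧ L ω' = false} := by
    ext; simp only [past, Set.mem_inter_iff, Set.mem_ofPred_eq]; tauto
  rw [e1] at hω
  have hω' : 0 < Pr p {ω' | (∀ i, i < k → T i ω' = T i ω) ∧ L ω' = false} :=
    Pr_pos_of_subset hp (fun _ h => h.2) hω
  have hi := hindep (X ω) (T k ω) (fun i => T i ω) hω
  rw [cPr, cPr, div_eq_div_iff hω.ne' hω'.ne'] at hi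
  rw [e1, e2, e3, e4, hi]

lemma one_sub_le_cPr_false_fiber_transcriptUpTo (hp : ∀ ω, 0 ≤ p ω) (X : Ω → S)
    (T : Fin m → Ω → M) (L : Ω → Bool) {c : ℝ}
    (hpost : ∀ (t : Fin m → M) (x : S), 0 < Pr p {ω | (∀ k, T k ω = t k) ∧ X ω = x} →
      cPr p {ω | L ω = true} {ω | (∀ k, T k ω = t k) ∧ X ω = x} ≤ c)
    {ω : Ω} (hω : 0 < p ω) :
    1 - c ≤ cPr p {ω | L ω = false} (fiber X ω ∩ fiber (transcriptUpTo T m) ω) := by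
  have hfull : fiber X ω ∩ fiber (transcriptUpTo T m) ω =
      {ω' | (∀ k, T k ω' = T k ω) ∧ X ω' = X ω} := by
    rw [fiber_transcriptUpTo]
    ext ω'
    simp [fiber, and_comm]
  have hpos : 0 < Pr p (fiber X ω ∩ fiber (transcriptUpTo T m) ω) :=
    hω.trans_le (le_Pr hp ⟨rfl, rfl⟩)
  rw [hfull] at hpos ⊢
  rw [cPr_false_eq_one_sub _ hpos.ne']
  linarith [hpost (fun k => T k ω) (X ω) hpos]

lemma Pr_false_inter_fiber_transcriptUpTo_pos (hp : ∀ ω, 0 ≤ p ω) {c : ℝ} (hc1 : c < 1)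
    (X : Ω → S) (T : Fin m → Ω → M) (L : Ω → Bool) {ω : Ω}
    (h : 1 - c ≤ cPr p {ω | L ω = false} (fiber X ω ∩ fiber (transcriptUpTo T m) ω))
    (hω : 0 < p ω) (k : ℕ) :
    0 < Pr p ({ω | L ω = false} ∩ (fiber X ω ∩ fiber (transcriptUpTo T k) ω)) := by
  have hsub : fiber (transcriptUpTo T m) ω ⊆ fiber (transcriptUpTo T k) ω := by
    rw [fiber_transcriptUpTo, fiber_transcriptUpTo]
    exact fun _ h i _ => h i i.isLt
  exact Pr_pos_of_subset hp (Set.inter_subset_inter_right _ (Set.inter_subset_inter_right _ hsub))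
    (Pr_inter_pos_of_cPr_ge hp hc1 h (hω.trans_le (le_Pr hp ⟨rfl, rfl⟩)))

lemma mutInfo_transcriptUpTo_self [Fintype S] [Fintype M] (X : Ω → S) (T : Fin m → Ω → M) :
    mutInfo p X (transcriptUpTo T m) = mutInfo p X (fun ω k => T k ω) := by
  rw [transcriptUpTo_self]
  exact mutInfo_comp_of_injective X (fun ω k => T k ω) (g := fun t i => some (t i))
    fun t t' h => funext fun i => Option.some_injective _ (congrFun h i)

end Transcript

/-- if each player leaks with prior probability `b` given `X`,
and the posterior probability of leaking stays `≤ c`, then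
`I(X;T) ≤ n·(−b·log₂(1−c) + c·log₂(1−b))/c`. -/
theorem info_le_capacity_bound {Ω S M : Type*} [Fintype Ω] [Fintype S] [Fintype M]
    {n m : ℕ}
    (p : Ω → ℝ) (hp : ∀ ω, 0 ≤ p ω) (hp1 : ∑ ω, p ω = 1)
    (X : Ω → S) (L : Fin n → Ω → Bool) (T : Fin m → Ω → M) (j : Fin m → Fin n)
    (b c : ℝ) (hb : 0 < b) (hbc : b ≤ c) (hc1 : c < 1)
    (hindep : ∀ (k : Fin m) (x : S) (a : M) (t : Fin m → M),
      0 < Pr p {ω | X ω = x ∧ (∀ i, i < k → T i ω = t i) ∧ L (j k) ω = false} →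
      cPr p {ω | T k ω = a}
          {ω | X ω = x ∧ (∀ i, i < k → T i ω = t i) ∧ L (j k) ω = false} =
        cPr p {ω | T k ω = a}
          {ω | (∀ i, i < k → T i ω = t i) ∧ L (j k) ω = false})
    (hprior : ∀ (i : Fin n) (x : S), 0 < Pr p {ω | X ω = x} →
      cPr p {ω | L i ω = true} {ω | X ω = x} = b)
    (hpost : ∀ (i : Fin n) (t : Fin m → M) (x : S),
      0 < Pr p {ω | (∀ k, T k ω = t k) ∧ X ω = x} →
      cPr p {ω | L i ω = true} {ω | (∀ k, T k ω = t k) ∧ X ω = x} ≤ c) :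
    mutInfo p X (fun ω k => T k ω) ≤
      (n : ℝ) * ((-b * Real.logb 2 (1 - c) + c * Real.logb 2 (1 - b)) / c) := by
  have hc0 : 0 < c := hb.trans_le hbc
  have hprior' := fun i ω (hω : 0 < p ω) => cPr_false_fiber_eq hp (L i) X (hprior i) hω
  have hpost' := fun i ω (hω : 0 < p ω) =>
    one_sub_le_cPr_false_fiber_transcriptUpTo hp X T (L i) (hpost i) hω
  have hpos := fun i k ω (hω : 0 < p ω) =>
    Pr_false_inter_fiber_transcriptUpTo_pos hp hc1 X T (L i) (hpost' i ω hω) hω k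
  have hchain := mutInfo_sub_le_sum_susp_sub hp X L (transcriptUpTo T) (fun k => mask k)
    (fun k ω => (mask_transcriptUpTo T k.le_succ ω).symm) m hpos fun k hk =>
      ⟨j ⟨k, hk⟩, fun ω hω =>
        condIndep_transcriptUpTo_succ hp X T _ ⟨k, hk⟩ (hindep ⟨k, hk⟩) (hpos _ k ω hω)⟩
  rw [mutInfo_transcriptUpTo_self, transcriptUpTo_zero, mutInfo_const hp1, sub_zero] at hchain
  have hfirst : ∀ i, susp p (L i) (fun ω => (X ω, transcriptUpTo T 0 ω)) =
      -Real.logb 2 (1 - b) := fun i =>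
    susp_eq_of_cPr_fiber_eq hp hp1 _ _ fun ω hω => by
      rw [fiber_prod, transcriptUpTo_zero, fiber_const, Set.inter_univ]
      exact hprior' i ω hω
  have hlast : ∀ i, susp p (L i) (fun ω => (X ω, transcriptUpTo T m ω)) ≤
      b / c * -Real.logb 2 (1 - c) := fun i =>
    (susp_le_of_cPr_fiber_ge hp hp1 _ _ hc0 hc1 fun ω hω => by
      rw [fiber_prod]; exact hpost' i ω hω).trans_eq <| by
        rw [Pr_eq_of_cPr_fiber_eq hp hp1 _ X (hprior' i), sub_sub_cancel]
  calc mutInfo p X (fun ω k => T k ω)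
      ≤ ∑ i, (susp p (L i) (fun ω => (X ω, transcriptUpTo T m ω)) -
          susp p (L i) (fun ω => (X ω, transcriptUpTo T 0 ω))) := hchain
    _ ≤ ∑ _i : Fin n, (b / c * -Real.logb 2 (1 - c) - -Real.logb 2 (1 - b)) :=
        Finset.sum_le_sum fun i _ => by rw [hfirst i]; linarith [hlast i]
    _ = _ := by
        rw [Finset.sum_const, Finset.card_univ, Fintype.card_fin, nsmul_eq_mul]
        field_simp
        ring
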